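/- arXiv:1110.0722 — 2 statements merged into one kernel-verified Lean document; each statement's English description precedes it below -/
import Mathlib

section
/- Assume ρ ≥ 3. Let γ ∈ V with γ² < 0 and γ 0 ≥ 0, and let α ∈ Pos̄ with α ≠ 0. Let Λ = {t•α + (1−t)•γ : t ∈ ℝ} be the affine line joining α to γ. Then Λ ∩ Pos̄ = {α} if and only if α² = 0 and α·γ = 0. -/
/-- The Minkowski bilinear form on `Fin ρ → ℝ`:
`B(x,y) = x 0 * y 0 − ∑_{i ≠ 0} x i * y i`, of signature `(1, ρ−1)`. -/
noncomputable def Bform {ρ : ℕ} [NeZero ρ] (x y : Fin ρ → ℝ) : ℝ :=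
  x 0 * y 0 - ∑ i ∈ Finset.univ.erase (0 : Fin ρ), x i * y i

/-- The closed positive cone `Pos̄ = {x : x² ≥ 0 ∧ x 0 ≥ 0}`. -/
def PosBar (ρ : ℕ) [NeZero ρ] : Set (Fin ρ → ℝ) :=
  {x | 0 ≤ Bform x x ∧ 0 ≤ x 0}

/-- The open positive cone `Pos = {x : x² > 0 ∧ x 0 > 0}`. -/
def PosOpen (ρ : ℕ) [NeZero ρ] : Set (Fin ρ → ℝ) :=
  {x | 0 < Bform x x ∧ 0 < x 0}

/-- The ray `R(v) = {t • v : t ≥ 0}` spanned by `v`. -/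
def Ray {ρ : ℕ} (v : Fin ρ → ℝ) : Set (Fin ρ → ℝ) :=
  {w | ∃ t : ℝ, 0 ≤ t ∧ w = t • v}


lemma Bform_expand {ρ : ℕ} [NeZero ρ] (s u : ℝ) (x y : Fin ρ → ℝ) :
    Bform (s • x + u • y) (s • x + u • y)
      = s^2 * Bform x x + 2*(s*u) * Bform x y + u^2 * Bform y y := by
  simp only [Bform, Pi.add_apply, Pi.smul_apply, smul_eq_mul]
  rw [Finset.sum_congr rfl
    (fun i _ => (by ring :
      (s*x i + u*y i)*(s*x i+u*y i)
        = s^2*(x i*x i) + 2*(s*u)*(x i*y i) + u^2*(y i*y i)))]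
  rw [Finset.sum_add_distrib, Finset.sum_add_distrib,
    ← Finset.mul_sum, ← Finset.mul_sum, ← Finset.mul_sum]
  ring

lemma eq_zero_of_coord {ρ : ℕ} [NeZero ρ] (α : Fin ρ → ℝ)
    (h2 : 0 ≤ Bform α α) (h0 : α 0 = 0) : α = 0 := by
  have hs : ∑ i ∈ Finset.univ.erase (0:Fin ρ), α i * α i ≤ 0 := by
    simpa [Bform, h0] using h2
  have hs' : ∑ i ∈ Finset.univ.erase (0:Fin ρ), α i * α i = 0 :=
    le_antisymm hs (Finset.sum_nonneg fun j _ => mul_self_nonneg (α j))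
  have hall := (Finset.sum_eq_zero_iff_of_nonneg
    (fun j _ => mul_self_nonneg (α j))).1 hs'
  funext i
  by_cases hi : i = 0
  · simpa [hi] using h0
  · have := hall i (Finset.mem_erase.2 ⟨hi, Finset.mem_univ i⟩)
    have := mul_self_eq_zero.1 this
    simpa using this

lemma exists_lt_gt (F G : ℝ → ℝ) (hF : Continuous F) (hG : Continuous G)
    (hF1 : 0 < F 1) (hG1 : 0 < G 1) :
    ∃ t₁ t₂ : ℝ, t₁ < 1 ∧ 1 < t₂ ∧ 0 < F t₁ ∧ 0 < G t₁ ∧ 0 < F t₂ ∧ 0 < G t₂ := by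
  have hopen : IsOpen {t : ℝ | 0 < F t ∧ 0 < G t} :=
    (isOpen_lt continuous_const hF).inter (isOpen_lt continuous_const hG)
  obtain ⟨ε, hε, hball⟩ := Metric.isOpen_iff.1 hopen 1 ⟨hF1, hG1⟩
  have h1 : (1 - ε/2 : ℝ) ∈ Metric.ball (1:ℝ) ε := by
    rw [Metric.mem_ball, Real.dist_eq,
      show (1 - ε/2 - 1 : ℝ) = -(ε/2) by ring, abs_neg,
      abs_of_nonneg (by linarith)]
    linarith
  have h2 : (1 + ε/2 : ℝ) ∈ Metric.ball (1:ℝ) ε := by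
    rw [Metric.mem_ball, Real.dist_eq,
      show (1 + ε/2 - 1 : ℝ) = ε/2 by ring,
      abs_of_nonneg (by linarith)]
    linarith
  obtain ⟨hf1, hg1⟩ := hball h1
  obtain ⟨hf2, hg2⟩ := hball h2
  exact ⟨1 - ε/2, 1 + ε/2, by linarith, by linarith, hf1, hg1, hf2, hg2⟩

/-- Lemma 1.4: for `γ` with `γ² < 0`, `γ 0 ≥ 0` and `0 ≠ α ∈ Pos̄`, the affine
line `Λ` joining `α` to `γ` meets `Pos̄` exactly in `{α}` iff `α² = 0 = α·γ`. -/
theorem stmt3 {ρ : ℕ} [NeZero ρ] (hρ : 3 ≤ ρ) (γ α : Fin ρ → ℝ)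
    (hγ2 : Bform γ γ < 0) (hγ0 : 0 ≤ γ 0) (hα : α ∈ PosBar ρ) (hα0 : α ≠ 0) :
    ({w : Fin ρ → ℝ | ∃ t : ℝ, w = t • α + (1 - t) • γ} ∩ PosBar ρ = {α}) ↔
      (Bform α α = 0 ∧ Bform α γ = 0) := by
  obtain ⟨ha2, ha0⟩ := hα
  have hexp : ∀ t : ℝ, Bform (t•α+(1-t)•γ) (t•α+(1-t)•γ)
      = t^2*Bform α α + 2*(t*(1-t))*Bform α γ + (1-t)^2*Bform γ γ :=
    fun t => Bform_expand t (1-t) α γ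
  have hcoord : ∀ t : ℝ, (t•α+(1-t)•γ) 0 = t*α 0 + (1-t)*γ 0 := by
    intro t; simp [smul_eq_mul]
  have hα0' : 0 < α 0 := by
    rcases lt_or_eq_of_le ha0 with h | h
    · exact h
    · exact absurd (eq_zero_of_coord α ha2 h.symm) hα0
  have hαγ : α ≠ γ := by
    intro he; rw [← he] at hγ2; linarith
  constructor
  · intro h
    have key : ∀ t : ℝ, 0 ≤ Bform (t•α+(1-t)•γ) (t•α+(1-t)•γ) →
        0 ≤ (t•α+(1-t)•γ) 0 → t = 1 := by
      intro t h1 h2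
      have hw : (t•α+(1-t)•γ) ∈ ({α} : Set (Fin ρ → ℝ)) := by
        rw [← h]; exact ⟨⟨t, rfl⟩, h1, h2⟩
      have hw' : t•α+(1-t)•γ = α := hw
      have h3 : (1 - t) • (γ - α) = (0 : Fin ρ → ℝ) := by
        have : (1 - t) • (γ - α) = (t•α+(1-t)•γ) - α := by module
        rw [this, hw', sub_self]
      rcases smul_eq_zero.1 h3 with h4 | h4
      · linarith [h4]
      · exact absurd (sub_eq_zero.1 h4).symm hαγ
    have ha : Bform α α = 0 := by
      by_contra hane
      have hapos : 0 < Bform α α := lt_of_le_of_ne ha2 (Ne.symm hane)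
      obtain ⟨t₁, t₂, ht1, ht2, hf1, hg1, hf2, hg2⟩ := exists_lt_gt
        (fun t => t^2*Bform α α + 2*(t*(1-t))*Bform α γ + (1-t)^2*Bform γ γ)
        (fun t => t*α 0 + (1-t)*γ 0)
        (by fun_prop) (by fun_prop)
        (by norm_num; exact hapos) (by norm_num; exact hα0')
      have := key t₁ (by rw [hexp t₁]; exact le_of_lt hf1)
        (by rw [hcoord t₁]; exact le_of_lt hg1)
      exact absurd this (ne_of_lt ht1)
    refine ⟨ha, ?_⟩
    by_contra hcne
    rcases lt_or_gt_of_ne hcne with hcneg | hcpos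
    · -- c < 0 : take t > 1
      obtain ⟨t₁, t₂, ht1, ht2, hf1, hg1, hf2, hg2⟩ := exists_lt_gt
        (fun t => -(2*t*Bform α γ + (1-t)*Bform γ γ))
        (fun t => t*α 0 + (1-t)*γ 0)
        (by fun_prop) (by fun_prop)
        (by norm_num; linarith) (by norm_num; exact hα0')
      have := key t₂
        (by
          rw [hexp t₂, ha]
          nlinarith [mul_pos (by linarith : (0:ℝ) < t₂ - 1) hf2])
        (by rw [hcoord t₂]; exact le_of_lt hg2)
      exact absurd this (ne_of_gt ht2)
    · -- c > 0 : take t < 1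
      obtain ⟨t₁, t₂, ht1, ht2, hf1, hg1, hf2, hg2⟩ := exists_lt_gt
        (fun t => 2*t*Bform α γ + (1-t)*Bform γ γ)
        (fun t => t*α 0 + (1-t)*γ 0)
        (by fun_prop) (by fun_prop)
        (by norm_num; linarith) (by norm_num; exact hα0')
      have := key t₁
        (by
          rw [hexp t₁, ha]
          nlinarith [mul_pos (by linarith : (0:ℝ) < 1 - t₁) hf1])
        (by rw [hcoord t₁]; exact le_of_lt hg1)
      exact absurd this (ne_of_lt ht1)
  · rintro ⟨ha, hc⟩
    ext w
    constructor
    · rintro ⟨⟨t, rfl⟩, hw1, hw2⟩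
      have he := hexp t
      rw [ha, hc] at he
      rw [he] at hw1
      have hsq : (1-t)^2 ≤ 0 := by nlinarith
      have hsq0 : (1-t)^2 = 0 := le_antisymm hsq (sq_nonneg _)
      have ht : t = 1 := by
        have := pow_eq_zero_iff (n := 2) (by norm_num) |>.1 hsq0
        linarith
      show t•α+(1-t)•γ ∈ ({α} : Set (Fin ρ → ℝ))
      rw [Set.mem_singleton_iff, ht]
      simp
    · intro hw
      rw [Set.mem_singleton_iff] at hw
      subst hw
      exact ⟨⟨1, by simp⟩, ha2, ha0⟩
end

section
/- Assume ρ ≥ 2. Let C, K, L ∈ V with L ∈ Pos, and set a := L² and b := K·L. Let p be a nonnegative integer and assume: C² = −1; C·K = 2p − 1; either (C·L = 0 and p = 0) or C·L ≥ 1; b² − a·K² − a > 0; and, in case p > b/(2a), also −K² ≥ 1 + 4a·p² − 4b·p. Set s₁ = (b + √(b² − a·K² − a))/a. Then R(C) ⊆ Pos̄ + R(K − s₁•L); more precisely, there exists a real number t₀ ≥ 1 such that t₀•C − (K − s₁•L) lies in Pos̄ and satisfies (t₀•C − (K − s₁•L))² = 0. -/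
lemma Bform_comm {ρ : ℕ} [NeZero ρ] (x y : Fin ρ → ℝ) : Bform x y = Bform y x := by
  simp [Bform, mul_comm]

lemma Bform_smul_left {ρ : ℕ} [NeZero ρ] (c : ℝ) (x y : Fin ρ → ℝ) :
    Bform (c • x) y = c * Bform x y := by
  simp [Bform, Finset.mul_sum, mul_sub, mul_assoc]

lemma Bform_sub_left {ρ : ℕ} [NeZero ρ] (x y z : Fin ρ → ℝ) :
    Bform (x - y) z = Bform x z - Bform y z := by
  simp [Bform, sub_mul, Finset.sum_sub_distrib]; ring

lemma Bform_sub_right {ρ : ℕ} [NeZero ρ] (x y z : Fin ρ → ℝ) :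
    Bform x (y - z) = Bform x y - Bform x z := by
  rw [Bform_comm, Bform_sub_left, Bform_comm y x, Bform_comm z x]

lemma Bform_smul_right {ρ : ℕ} [NeZero ρ] (c : ℝ) (x y : Fin ρ → ℝ) :
    Bform x (c • y) = c * Bform x y := by
  rw [Bform_comm, Bform_smul_left, Bform_comm]

lemma lorentz {ρ : ℕ} [NeZero ρ] (x y : Fin ρ → ℝ) (hx : 0 ≤ Bform x x)
    (hy : 0 ≤ Bform y y) (hy0 : 0 < y 0) (hxy : 0 < Bform x y) : 0 ≤ x 0 := by
  by_contra h
  push_neg at h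
  set S := Finset.univ.erase (0 : Fin ρ) with hS
  have hCS := Finset.sum_mul_sq_le_sq_mul_sq S x y
  have hx' : ∑ i ∈ S, x i ^ 2 ≤ x 0 ^ 2 := by
    have : Bform x x = x 0 ^ 2 - ∑ i ∈ S, x i ^ 2 := by
      simp [Bform, hS, sq]
    linarith [this ▸ hx]
  have hy' : ∑ i ∈ S, y i ^ 2 ≤ y 0 ^ 2 := by
    have : Bform y y = y 0 ^ 2 - ∑ i ∈ S, y i ^ 2 := by
      simp [Bform, hS, sq]
    linarith [this ▸ hy]
  have hxn : (0:ℝ) ≤ ∑ i ∈ S, x i ^ 2 := Finset.sum_nonneg fun i _ => sq_nonneg _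
  have hyn : (0:ℝ) ≤ ∑ i ∈ S, y i ^ 2 := Finset.sum_nonneg fun i _ => sq_nonneg _
  have hP2 : (∑ i ∈ S, x i * y i) ^ 2 ≤ x 0 ^ 2 * y 0 ^ 2 :=
    le_trans hCS (mul_le_mul hx' hy' hyn (sq_nonneg _))
  have hBxy : Bform x y = x 0 * y 0 - ∑ i ∈ S, x i * y i := by simp [Bform, hS]
  rw [hBxy] at hxy
  nlinarith [hxy, hP2, mul_pos hy0 (neg_pos.mpr h)]

set_option maxHeartbeats 1000000 in
/-- Proposition 5.2 ((−1,p)-case). -/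
theorem stmt10 {ρ : ℕ} [NeZero ρ] (hρ : 2 ≤ ρ) (C K L : Fin ρ → ℝ)
    (hL : L ∈ PosOpen ρ) (a b : ℝ) (ha : a = Bform L L) (hb : b = Bform K L)
    (p : ℕ)
    (hC2 : Bform C C = -1) (hCK : Bform C K = 2 * (p : ℝ) - 1)
    (hCL : (Bform C L = 0 ∧ p = 0) ∨ 1 ≤ Bform C L)
    (hdisc : 0 < b ^ 2 - a * Bform K K - a)
    (hp : b / (2 * a) < (p : ℝ) →
      1 + 4 * a * (p : ℝ) ^ 2 - 4 * b * (p : ℝ) ≤ -(Bform K K))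
    (s₁ : ℝ) (hs₁ : s₁ = (b + Real.sqrt (b ^ 2 - a * Bform K K - a)) / a) :
    (Ray C ⊆ {z | ∃ α ∈ PosBar ρ, ∃ w ∈ Ray (K - s₁ • L), z = α + w}) ∧
      ∃ t₀ : ℝ, 1 ≤ t₀ ∧ (t₀ • C - (K - s₁ • L)) ∈ PosBar ρ ∧
        Bform (t₀ • C - (K - s₁ • L)) (t₀ • C - (K - s₁ • L)) = 0 := by
  obtain ⟨hL2, hL0⟩ := hL
  set d : ℝ := b ^ 2 - a * Bform K K - a with hd
  have ha0 : 0 < a := ha ▸ hL2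
  have hsq : Real.sqrt d ^ 2 = d := Real.sq_sqrt hdisc.le
  have hsqnn : 0 ≤ Real.sqrt d := Real.sqrt_nonneg d
  have hsqpos : 0 < Real.sqrt d := Real.sqrt_pos.mpr hdisc
  have hs1a : s₁ * a = b + Real.sqrt d := by
    rw [hs₁]; field_simp
  -- s₁ is a root of a s² − 2 b s + (K² + 1) = 0
  have hroot : a * s₁ ^ 2 - 2 * b * s₁ + (Bform K K + 1) = 0 := by
    have key : a * (a * s₁ ^ 2 - 2 * b * s₁ + (Bform K K + 1)) = 0 := by
      have h1 : a * (a * s₁ ^ 2 - 2 * b * s₁ + (Bform K K + 1)) =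
          (s₁ * a) ^ 2 - 2 * b * (s₁ * a) + a * (Bform K K + 1) := by ring
      rw [h1, hs1a]
      have h2 : d = b ^ 2 - a * Bform K K - a := hd
      linear_combination hsq + h2
    rcases mul_eq_zero.mp key with h | h
    · exact absurd h ha0.ne'
    · exact h
  set ℓ : ℝ := Bform C L with hℓ
  have hℓ0 : 0 ≤ ℓ := by
    rcases hCL with ⟨h1, _⟩ | h1
    · exact h1.ge
    · linarith
  -- b + √d ≥ 2 a p
  have hs2p : 2 * (p : ℝ) * a ≤ b + Real.sqrt d := by
    by_cases hc : b / (2 * a) < (p : ℝ)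
    · have hKp := hp hc
      have hge : (2 * (p : ℝ) * a - b) ^ 2 ≤ d := by
        rw [hd]
        nlinarith [mul_le_mul_of_nonneg_left hKp ha0.le]
      nlinarith [hsq, hsqnn, hge, sq_nonneg (2 * (p : ℝ) * a - b - Real.sqrt d)]
    · push_neg at hc
      have h2a : (0:ℝ) < 2 * a := by linarith
      rw [le_div_iff₀ h2a] at hc
      linarith
  have hs1_2p : 2 * (p : ℝ) ≤ s₁ := by
    rw [hs₁, le_div_iff₀ ha0]
    linarith
  have hs1nn : 0 ≤ s₁ := le_trans (by positivity) hs1_2p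
  -- m = C · (K − s₁ L)
  have hCM : Bform C (K - s₁ • L) = 2 * (p : ℝ) - 1 - s₁ * ℓ := by
    rw [Bform_sub_right, Bform_smul_right, hCK, hℓ]
  set m : ℝ := 2 * (p : ℝ) - 1 - s₁ * ℓ with hm
  have hm1 : m ≤ -1 := by
    rcases hCL with ⟨h1, h2⟩ | h1
    · rw [hm, h1, h2]; norm_num
    · have h2 : s₁ * 1 ≤ s₁ * ℓ := by
        apply mul_le_mul_of_nonneg_left _ hs1nn
        linarith
      rw [mul_one] at h2
      rw [hm]; linarith
  have hm2 : 1 ≤ m ^ 2 := by nlinarith [sq_nonneg (m + 1)]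
  set e : ℝ := Real.sqrt (m ^ 2 - 1) with he
  have he2 : e ^ 2 = m ^ 2 - 1 := Real.sq_sqrt (by linarith)
  have henn : 0 ≤ e := Real.sqrt_nonneg _
  set t₀ : ℝ := -m + e with ht₀def
  have ht₀1 : 1 ≤ t₀ := by rw [ht₀def]; linarith
  have ht₀pos : 0 < t₀ := by linarith
  have hteq : t₀ ^ 2 + 2 * m * t₀ + 1 = 0 := by
    rw [ht₀def]; linear_combination he2
  -- M² = −1
  have hMM : Bform (K - s₁ • L) (K - s₁ • L) = -1 := by
    rw [Bform_sub_left, Bform_sub_right, Bform_sub_right, Bform_smul_left,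
      Bform_smul_right, Bform_smul_right, Bform_smul_left]
    have h1 : Bform L K = b := by rw [Bform_comm]; exact hb.symm
    rw [h1, ← hb, ← ha]
    linear_combination hroot
  have hMC : Bform (K - s₁ • L) C = m := by
    rw [Bform_comm]; rw [hCM]
  have hCMm : Bform C (K - s₁ • L) = m := hCM
  -- D := t₀ C − M has D² = 0
  have hDD : Bform (t₀ • C - (K - s₁ • L)) (t₀ • C - (K - s₁ • L)) = 0 := by
    have e1 : Bform (t₀ • C - (K - s₁ • L)) (t₀ • C - (K - s₁ • L)) =
        t₀ * (t₀ * Bform C C) - t₀ * Bform C (K - s₁ • L)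
          - (t₀ * Bform (K - s₁ • L) C - Bform (K - s₁ • L) (K - s₁ • L)) := by
      simp only [Bform_sub_left, Bform_sub_right, Bform_smul_left, Bform_smul_right]
      ring
    rw [e1, hC2, hCMm, hMC, hMM]
    linear_combination -hteq
  -- D · L > 0
  have hDL : 0 < Bform (t₀ • C - (K - s₁ • L)) L := by
    rw [Bform_sub_left, Bform_sub_left, Bform_smul_left, Bform_smul_left, ← hℓ, ← hb, ← ha]
    have h1 : t₀ * ℓ - (b - s₁ * a) = t₀ * ℓ + Real.sqrt d := by
      rw [hs1a]; ring
    rw [h1]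
    have : 0 ≤ t₀ * ℓ := mul_nonneg ht₀pos.le hℓ0
    linarith
  -- D 0 ≥ 0
  have hD0 : 0 ≤ (t₀ • C - (K - s₁ • L)) 0 :=
    lorentz _ L (le_of_eq hDD.symm) hL2.le hL0 hDL
  have hDbar : (t₀ • C - (K - s₁ • L)) ∈ PosBar ρ := ⟨le_of_eq hDD.symm, hD0⟩
  constructor
  · rintro z ⟨t, ht, rfl⟩
    refine ⟨(t / t₀) • (t₀ • C - (K - s₁ • L)), ?_, (t / t₀) • (K - s₁ • L),
      ⟨t / t₀, div_nonneg ht ht₀pos.le, rfl⟩, ?_⟩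
    · constructor
      · rw [Bform_smul_left, Bform_smul_right, hDD]
        simp
      · simp only [Pi.smul_apply, smul_eq_mul]
        exact mul_nonneg (div_nonneg ht ht₀pos.le) hD0
    · rw [← smul_add, sub_add_cancel, smul_smul, div_mul_cancel₀]
      exact ht₀pos.ne'
  · exact ⟨t₀, ht₀1, hDbar, hDD⟩
end
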